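/- Let μ, ν be real numbers with ν > 0 and μ² + ν² = 1, and let n ≥ 1. Then the real Jordan block A = J_ℝ(μ ± iν, 2n) = Ψ(J(μ+iν,n)) ∈ GL(2n,ℝ) is strongly reversible in GL(2n,ℝ); that is, there exists an invertible 2n×2n real matrix g with g² = I and g·A·g⁻¹ = A⁻¹. -/

import Mathlib

open Matrix

set_option maxHeartbeats 1000000

/-- The Jordan block `J(λ, m)`: an `m × m` matrix with `λ` on the diagonal,
`1` on the superdiagonal, and `0` elsewhere. -/
def jordanBlock {D : Type*} [Ring D] (lam : D) (m : ℕ) : Matrix (Fin m) (Fin m) D :=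
  Matrix.of fun i j => if i = j then lam else if (i : ℕ) + 1 = (j : ℕ) then 1 else 0

/-- The realification embedding `Ψ : M(n,ℂ) → M(2n,ℝ)`, replacing each complex entry
`z` by the 2×2 real block `((Re z, Im z), (-Im z, Re z))`. -/
def Psi {n : ℕ} (A : Matrix (Fin n) (Fin n) ℂ) :
    Matrix (Fin n × Fin 2) (Fin n × Fin 2) ℝ :=
  Matrix.of fun p q =>
    !![(A p.1 q.1).re, (A p.1 q.1).im; -(A p.1 q.1).im, (A p.1 q.1).re] p.2 q.2

/-- The standard embedding of `ℂ` into the real quaternions,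
sending `a + b i` to `a + b 𝐢`. -/
def toQuat (z : ℂ) : Quaternion ℝ := ⟨z.re, z.im, 0, 0⟩

/-- `X ∈ gl(n,D)` is `Ad_{GL(n,D)}`-real: there is an invertible matrix `g`
with `g X g⁻¹ = -X`. -/
def AdjReal {D : Type*} [Ring D] {ι : Type*} [Fintype ι] [DecidableEq ι]
    (X : Matrix ι ι D) : Prop :=
  ∃ g : (Matrix ι ι D)ˣ, g.val * X * (g⁻¹).val = -X

/-- `X ∈ gl(n,D)` is strongly `Ad_{GL(n,D)}`-real: there is an invertible matrix `g`
with `g² = I` and `g X g⁻¹ = -X`. -/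
def StronglyAdjReal {D : Type*} [Ring D] {ι : Type*} [Fintype ι] [DecidableEq ι]
    (X : Matrix ι ι D) : Prop :=
  ∃ g : (Matrix ι ι D)ˣ, g * g = 1 ∧ g.val * X * (g⁻¹).val = -X

/-- `A` is reversible in `GL(n,D)`: `A` is invertible and there is an invertible
matrix `g` with `g A g⁻¹ = A⁻¹`. -/
def Reversible {D : Type*} [Ring D] {ι : Type*} [Fintype ι] [DecidableEq ι]
    (A : Matrix ι ι D) : Prop :=
  ∃ a : (Matrix ι ι D)ˣ, a.val = A ∧ ∃ g : (Matrix ι ι D)ˣ, g * a * g⁻¹ = a⁻¹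

/-- `A` is strongly reversible in `GL(n,D)`: `A` is invertible and there is an
invertible matrix `g` with `g² = I` and `g A g⁻¹ = A⁻¹`. -/
def StronglyReversible {D : Type*} [Ring D] {ι : Type*} [Fintype ι] [DecidableEq ι]
    (A : Matrix ι ι D) : Prop :=
  ∃ a : (Matrix ι ι D)ˣ, a.val = A ∧ ∃ g : (Matrix ι ι D)ˣ, g * g = 1 ∧ g * a * g⁻¹ = a⁻¹

/-!
Write `α = μ + iν`, so `α * conj α = 1`, and `J = J(α, n) = α + S` with `S` the nilpotent shift.
Then `J⁻¹ = conj α + M` with `M = -conj α * J⁻¹ * S` nilpotent. Since the first standard row vector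
is cyclic for `S` acting from the right, there is `k` with `S k = k M` and first row that of `1`
(its rows are the first rows of the powers of `M`); this says `conj J * k * J = k`. Conjugating,
`k̄ k` commutes with `J`, hence with `S`, and its first row is that of `1`, so `k̄ k = 1`.
With `C` the realification of complex conjugation, `C Ψ(X) C = Ψ(X̄)`, so `g = C Ψ(k)` satisfies
`g² = Ψ(k̄ k) = 1` and `(g Ψ(J))² = Ψ(k̄ J̄ k J) = 1`: `Ψ(J)` is a product of two involutions.
-/

open ComplexConjugate

theorem stronglyReversible_of_mul_self_eq_one {D : Type*} [Ring D] {ι : Type*} [Fintype ι]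
    [DecidableEq ι] {A g : Matrix ι ι D} (hg : g * g = 1) (hgA : g * A * (g * A) = 1) :
    StronglyReversible A := by
  have hAg : A * (g * A * g) = 1 := by
    calc A * (g * A * g) = g * (g * A * (g * A)) * g := by simp only [← mul_assoc, hg, one_mul]
      _ = 1 := by rw [hgA, mul_one, hg]
  have hgA' : g * A * g * A = 1 := by rw [← hgA]; simp only [mul_assoc]
  exact ⟨⟨A, g * A * g, hAg, hgA'⟩, rfl, ⟨g, g, hg, hg⟩, Units.ext hg, Units.ext rfl⟩

section Shift

variable {R : Type*} [Ring R] {m : ℕ}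

theorem jordanBlock_zero_mul_castSucc (Y : Matrix (Fin (m + 1)) (Fin (m + 1)) R) (i : Fin m) :
    (jordanBlock (0 : R) (m + 1) * Y) i.castSucc = Y i.succ := by
  have : jordanBlock (0 : R) (m + 1) i.castSucc = Pi.single i.succ 1 := by
    ext j
    simp only [jordanBlock, of_apply, Pi.single_apply, Fin.ext_iff, Fin.val_castSucc,
      Fin.val_succ]
    split_ifs <;> first | rfl | omega
  rw [mul_apply_eq_vecMul, this, single_one_vecMul]
  rfl

theorem jordanBlock_zero_mul_last (Y : Matrix (Fin (m + 1)) (Fin (m + 1)) R) :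
    (jordanBlock (0 : R) (m + 1) * Y) (Fin.last m) = 0 := by
  have : jordanBlock (0 : R) (m + 1) (Fin.last m) = 0 := by
    ext j
    simp only [jordanBlock, of_apply, Fin.val_last, Pi.zero_apply]
    split_ifs <;> first | rfl | omega
  rw [mul_apply_eq_vecMul, this, zero_vecMul]

theorem jordanBlock_zero_pow_succ : jordanBlock (0 : R) (m + 1) ^ (m + 1) = 0 := by
  have rows : ∀ k (i : Fin (m + 1)), m < i + k → (jordanBlock (0 : R) (m + 1) ^ k) i = 0 := by
    intro k
    induction k with
    | zero => intro i hi; omega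
    | succ k ih =>
      intro i
      refine Fin.lastCases (fun _ => ?_) (fun i hi => ?_) i
      · rw [pow_succ', jordanBlock_zero_mul_last]
      · rw [pow_succ', jordanBlock_zero_mul_castSucc]
        exact ih _ (by simp only [Fin.val_succ, Fin.val_castSucc] at hi ⊢; omega)
  ext i j
  exact congrFun (rows _ i (by omega)) j

theorem eq_one_of_commute_jordanBlock_zero {X : Matrix (Fin (m + 1)) (Fin (m + 1)) R}
    (hX : Commute (jordanBlock (0 : R) (m + 1)) X)
    (h0 : X 0 = (1 : Matrix _ _ R) (0 : Fin (m + 1))) : X = 1 := by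
  suffices rows : ∀ i, X i = (1 : Matrix _ _ R) i from
    Matrix.ext fun i j => congrFun (rows i) j
  refine Fin.induction h0 fun i ih => ?_
  calc X i.succ = (jordanBlock (0 : R) (m + 1) * X) i.castSucc :=
        (jordanBlock_zero_mul_castSucc X i).symm
    _ = (1 * jordanBlock (0 : R) (m + 1) : Matrix (Fin (m + 1)) (Fin (m + 1)) R) i.castSucc := by
      rw [hX.eq, mul_apply_eq_vecMul, mul_apply_eq_vecMul, ih]
    _ = (1 : Matrix _ _ R) i.succ := by
      rw [one_mul, ← mul_one (jordanBlock _ _), jordanBlock_zero_mul_castSucc]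

theorem exists_jordanBlock_zero_mul_eq_mul (M : Matrix (Fin (m + 1)) (Fin (m + 1)) R)
    (hM : M ^ (m + 1) = 0) :
    ∃ k, jordanBlock (0 : R) (m + 1) * k = k * M ∧
      k 0 = (1 : Matrix _ _ R) (0 : Fin (m + 1)) := by
  set k : Matrix (Fin (m + 1)) (Fin (m + 1)) R := of fun i => (M ^ (i : ℕ)) 0
  have hkM : ∀ i, (k * M) i = (M ^ ((i : ℕ) + 1)) 0 := fun i => by
    rw [mul_apply_eq_vecMul, pow_succ, mul_apply_eq_vecMul]; rfl
  refine ⟨k, Matrix.ext fun i j => congrFun ?_ j, ?_⟩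
  swap
  · rw [show k 0 = (M ^ 0) 0 from rfl, pow_zero]
  refine Fin.lastCases ?_ (fun i => ?_) i
  · rw [jordanBlock_zero_mul_last, hkM, Fin.val_last, hM]; rfl
  · rw [jordanBlock_zero_mul_castSucc, hkM]; rfl

end Shift

theorem jordanBlock_eq_smul_one_add {R : Type*} [CommRing R] (α : R) (n : ℕ) :
    jordanBlock α n = α • 1 + jordanBlock 0 n := by
  ext i j
  by_cases h : i = j <;> simp [jordanBlock, one_apply, h]

theorem jordanBlock_map {R S : Type*} [Ring R] [Ring S] (f : R →+* S) (α : R) (n : ℕ) :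
    (jordanBlock α n).map f = jordanBlock (f α) n := by
  ext i j
  simp only [jordanBlock, map_apply, of_apply, apply_ite f, map_one, map_zero]

theorem isUnit_jordanBlock {R : Type*} [CommRing R] {α : R} (hα : IsUnit α) (n : ℕ) :
    IsUnit (jordanBlock α n) := by
  have hupper : (jordanBlock α n).IsUpperTriangular := fun i j hji => by
    rw [id, id, Fin.lt_def] at hji
    simp only [jordanBlock, of_apply]
    rw [if_neg (by omega), if_neg (by omega)]
  rw [isUnit_iff_isUnit_det, det_of_isUpperTriangular hupper]
  simpa [jordanBlock] using hα.pow n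

section Reverser

variable {K : Type*} [CommRing K] [StarRing K] {m : ℕ}

theorem exists_jordanBlock_map_conj_mul_mul_eq {α : K} (hα : α * conj α = 1) :
    ∃ k : Matrix (Fin (m + 1)) (Fin (m + 1)) K,
      (jordanBlock α (m + 1)).map conj * k * jordanBlock α (m + 1) = k ∧
        k 0 = (1 : Matrix _ _ K) (0 : Fin (m + 1)) := by
  set S := jordanBlock (0 : K) (m + 1)
  set J := jordanBlock α (m + 1)
  have hS : S = J - α • 1 := (sub_eq_of_eq_add' (jordanBlock_eq_smul_one_add α _)).symm
  have hJbar : J.map conj = conj α • 1 + S :=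
    (jordanBlock_map _ α _).trans (jordanBlock_eq_smul_one_add _ _)
  obtain ⟨u, hu⟩ : IsUnit J := isUnit_jordanBlock (IsUnit.of_mul_eq_one _ hα) (m + 1)
  set Jinv : Matrix (Fin (m + 1)) (Fin (m + 1)) K := ↑u⁻¹
  have hJinv_mul : Jinv * J = 1 := hu ▸ u.inv_mul
  have hcomm : Commute Jinv S := by
    have : Commute Jinv J := hJinv_mul.trans (hu ▸ u.mul_inv).symm
    rw [hS]
    exact this.sub_right ((Commute.one_right _).smul_right α)
  set M := Jinv - conj α • 1
  have hM : M = -conj α • (Jinv * S) := by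
    rw [hS, mul_sub, hJinv_mul, mul_smul_comm, mul_one, smul_sub, smul_smul, neg_mul,
      mul_comm, hα]
    module
  have hMpow : M ^ (m + 1) = 0 := by
    rw [hM, smul_pow, hcomm.mul_pow, jordanBlock_zero_pow_succ, mul_zero, smul_zero]
  obtain ⟨k, hSk, hk0⟩ := exists_jordanBlock_zero_mul_eq_mul M hMpow
  refine ⟨k, ?_, hk0⟩
  have : J.map conj * k = k * Jinv := by
    rw [hJbar, add_mul, hSk, smul_mul, one_mul, mul_sub, Matrix.mul_smul, mul_one]
    abel
  rw [this, mul_assoc, hJinv_mul, mul_one]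

theorem map_conj_mul_self_eq_one {α : K} {k : Matrix (Fin (m + 1)) (Fin (m + 1)) K}
    (hJk : (jordanBlock α (m + 1)).map conj * k * jordanBlock α (m + 1) = k)
    (hk0 : k 0 = (1 : Matrix _ _ K) (0 : Fin (m + 1))) :
    k.map conj * k = 1 := by
  set J := jordanBlock α (m + 1)
  have hJk' : J * k.map conj * J.map conj = k.map conj := by
    have hJbarbar : (J.map conj).map conj = J := by ext; simp
    simpa only [Matrix.map_mul, hJbarbar] using congrArg (Matrix.map · conj) hJk
  have hJX : Commute J (k.map conj * k) := by
    calc J * (k.map conj * k) = J * k.map conj * (J.map conj * k * J) := by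
          rw [hJk, mul_assoc]
      _ = J * k.map conj * J.map conj * k * J := by simp only [mul_assoc]
      _ = k.map conj * k * J := by rw [hJk']
  have hk0bar : k.map conj 0 = (1 : Matrix _ _ K) (0 : Fin (m + 1)) := by
    ext j
    simp [congrFun hk0 j, one_apply]
  refine eq_one_of_commute_jordanBlock_zero ?_ ?_
  · rw [(sub_eq_of_eq_add' (jordanBlock_eq_smul_one_add α _)).symm]
    exact hJX.sub_left ((Commute.one_left _).smul_left α)
  · rw [mul_apply_eq_vecMul, hk0bar, ← mul_apply_eq_vecMul, one_mul, hk0]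

end Reverser

theorem exists_reverser_jordanBlock {K : Type*} [CommRing K] [StarRing K] {α : K}
    (hα : α * conj α = 1) (n : ℕ) :
    ∃ k : Matrix (Fin n) (Fin n) K, k.map conj * k = 1 ∧
      (jordanBlock α n).map conj * k * jordanBlock α n = k := by
  obtain _ | m := n
  · exact ⟨1, Subsingleton.elim _ _, Subsingleton.elim _ _⟩
  obtain ⟨k, hJk, hk0⟩ := exists_jordanBlock_map_conj_mul_mul_eq hα
  exact ⟨k, map_conj_mul_self_eq_one hJk hk0, hJk⟩

/-- The blocks `!![z.re, z.im; -z.im, z.re]` of `Psi` are the matrices of multiplication by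
`conj z` in the basis `1, i` of `ℂ` over `ℝ`. -/
noncomputable def psiRingHom (n : ℕ) :
    Matrix (Fin n) (Fin n) ℂ →+* Matrix (Fin n × Fin 2) (Fin n × Fin 2) ℝ :=
  (compRingEquiv (Fin n) (Fin 2) ℝ).toRingHom.comp
    (((Algebra.leftMulMatrix Complex.basisOneI).toRingHom.comp (starRingEnd ℂ)).mapMatrix)

theorem psiRingHom_apply {n : ℕ} (A : Matrix (Fin n) (Fin n) ℂ) : psiRingHom n A = Psi A := by
  ext ⟨i, a⟩ ⟨j, b⟩
  fin_cases a <;> fin_cases b <;>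
    simp [psiRingHom, Psi, Algebra.leftMulMatrix_complex]

theorem Psi_mul {n : ℕ} (A B : Matrix (Fin n) (Fin n) ℂ) : Psi (A * B) = Psi A * Psi B := by
  simp only [← psiRingHom_apply, map_mul]

theorem Psi_one {n : ℕ} : Psi (1 : Matrix (Fin n) (Fin n) ℂ) = 1 := by
  rw [← psiRingHom_apply, map_one]

/-- The realification of complex conjugation `ℂⁿ → ℂⁿ`. -/
def realConj (n : ℕ) : Matrix (Fin n × Fin 2) (Fin n × Fin 2) ℝ :=
  diagonal fun p => if p.2 = 0 then 1 else -1

theorem realConj_mul_Psi_mul_realConj {n : ℕ} (X : Matrix (Fin n) (Fin n) ℂ) :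
    realConj n * Psi X * realConj n = Psi (X.map conj) := by
  ext ⟨i, a⟩ ⟨j, b⟩
  fin_cases a <;> fin_cases b <;> simp [realConj, Psi, diagonal_mul, mul_diagonal]

theorem stronglyReversible_Psi {n : ℕ} {J k : Matrix (Fin n) (Fin n) ℂ}
    (hk : k.map conj * k = 1) (hJk : J.map conj * k * J = k) :
    StronglyReversible (Psi J) := by
  set C := realConj n
  have conj_Psi : ∀ X, C * Psi X * C = Psi (X.map conj) := realConj_mul_Psi_mul_realConj
  refine stronglyReversible_of_mul_self_eq_one (g := C * Psi k) ?_ ?_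
  · calc C * Psi k * (C * Psi k) = C * Psi k * C * Psi k := by simp only [mul_assoc]
      _ = 1 := by rw [conj_Psi, ← Psi_mul, hk, Psi_one]
  · calc C * Psi k * Psi J * (C * Psi k * Psi J) = C * Psi (k * J) * C * Psi (k * J) := by
          simp only [Psi_mul, mul_assoc]
      _ = 1 := by
          rw [conj_Psi, ← Psi_mul, Matrix.map_mul, mul_assoc, ← mul_assoc (J.map conj), hJk, hk,
            Psi_one]

theorem stmt8_general (μ ν : ℝ) (h1 : μ ^ 2 + ν ^ 2 = 1) (n : ℕ) :
    StronglyReversible (Psi (jordanBlock ((⟨μ, ν⟩ : ℂ)) n)) := by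
  have hα : (⟨μ, ν⟩ : ℂ) * conj ⟨μ, ν⟩ = 1 := by
    rw [Complex.mul_conj, Complex.normSq_mk, ← Complex.ofReal_one]
    congr 1
    linear_combination h1
  obtain ⟨k, hk, hJk⟩ := exists_reverser_jordanBlock hα n
  exact stronglyReversible_Psi hk hJk

/-- For real `μ, ν` with `ν > 0` and `μ² + ν² = 1`, and `n ≥ 1`, the real
Jordan block `A = J_ℝ(μ ± iν, 2n) = Ψ(J(μ+iν,n)) ∈ GL(2n,ℝ)` is strongly reversible
in `GL(2n,ℝ)`. -/
theorem stmt8 (μ ν : ℝ) (hν : 0 < ν) (h1 : μ ^ 2 + ν ^ 2 = 1) (n : ℕ) (hn : 1 ≤ n) :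
    StronglyReversible (Psi (jordanBlock ((⟨μ, ν⟩ : ℂ)) n)) :=
  stmt8_general μ ν h1 n
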